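/- Let v ∈ ℝ^{n+2} be a unit vector with J v = λ v for some real λ, and define a = v(0)|0,R⟩ + Σ_{j=1}^{n} v(j)(√q|j,L⟩ + √p|j,R⟩) + v(n+1)|n+1,L⟩ ∈ H_n and b = S a. Then ‖a‖ = ‖b‖ = 1, U a = b, U b = 2λ b − a, and the inner product ⟨a, b⟩ = λ. In particular U preserves the span of {a, b}. -/

import Mathlib

open Filter Finset

/- Index convention for the Hilbert space `H_n` of dimension `2n+2`:
index `0` is `|0,R⟩`, index `2j-1` is `|j,L⟩` and `2j` is `|j,R⟩` for `1 ≤ j ≤ n`,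
and index `2n+1` is `|n+1,L⟩`. -/

/-- Entries of the coin operator `C`. Column `l` is the image of the `l`-th basis vector. -/
noncomputable def coinEntry (p q : ℝ) (n k l : ℕ) : ℝ :=
  if l = 0 ∨ l = 2 * n + 1 then (if k = l then 1 else 0)
  else if l % 2 = 1 then
    (if k = l then 2 * q - 1 else if k = l + 1 then 2 * Real.sqrt (p * q) else 0)
  else
    (if k = l then 2 * p - 1 else if k + 1 = l then 2 * Real.sqrt (p * q) else 0)

noncomputable def coinM (p q : ℝ) (n : ℕ) : Matrix (Fin (2 * n + 2)) (Fin (2 * n + 2)) ℂ :=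
  fun k l => ((coinEntry p q n k.1 l.1 : ℝ) : ℂ)

/-- The shift operator: `S|j,R⟩ = |j+1,L⟩`, `S|j,L⟩ = |j-1,R⟩`; in our indexing,
`S e_l = e_{l+1}` for even `l` and `S e_l = e_{l-1}` for odd `l`. -/
def shiftM (n : ℕ) : Matrix (Fin (2 * n + 2)) (Fin (2 * n + 2)) ℂ :=
  fun k l => if l.1 % 2 = 0 then (if k.1 = l.1 + 1 then 1 else 0)
             else (if k.1 + 1 = l.1 then 1 else 0)

/-- The walk operator `U = S C`. -/
noncomputable def walkM (p q : ℝ) (n : ℕ) : Matrix (Fin (2 * n + 2)) (Fin (2 * n + 2)) ℂ :=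
  shiftM n * coinM p q n

/-- The `(n+2) × (n+2)` Jacobi matrix of the reflected random walk on the path:
zero diagonal, `J(0,1) = √q`, `J(i,i+1) = √(pq)` for `1 ≤ i ≤ n-1`, `J(n,n+1) = √p`,
and symmetric. -/
noncomputable def jacobiM (p q : ℝ) (n : ℕ) : Matrix (Fin (n + 2)) (Fin (n + 2)) ℝ :=
  fun k l =>
    if k.1 + 1 = l.1 then
      (if k.1 = 0 then Real.sqrt q else if k.1 = n then Real.sqrt p else Real.sqrt (p * q))
    else if l.1 + 1 = k.1 then
      (if l.1 = 0 then Real.sqrt q else if l.1 = n then Real.sqrt p else Real.sqrt (p * q))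
    else 0

/-- The lift `a ∈ H_n` of a vector `v ∈ ℝ^{n+2}`:
`a = v(0)|0,R⟩ + ∑_{j=1}^{n} v(j)(√q|j,L⟩ + √p|j,R⟩) + v(n+1)|n+1,L⟩`. -/
noncomputable def liftVec (p q : ℝ) (n : ℕ) (v : Fin (n + 2) → ℝ) : Fin (2 * n + 2) → ℂ :=
  fun k =>
    if k.1 = 0 then ((v 0 : ℝ) : ℂ)
    else if k.1 = 2 * n + 1 then ((v (Fin.last (n + 1)) : ℝ) : ℂ)
    else (((if k.1 % 2 = 1 then Real.sqrt q else Real.sqrt p) *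
      v ⟨(k.1 + 1) / 2, by have := k.isLt; omega⟩ : ℝ) : ℂ)

/-!
The lift `v ↦ a` is `a = L v` for a matrix `L` with orthonormal columns (`Lᴴ L = 1`, which is
`p + q = 1`), the coin is the reflection `C = 2 L Lᴴ - 1` about the range of `L`, the shift `S` is a
self-adjoint involution, and `Lᴴ S L = J`. This is all that is needed (Szegedy's spectral lemma):
`C a = a` gives `U a = S a = b`; `C b = 2 L (Lᴴ S L v) - b = 2λ a - b` gives `U b = 2λ b - S² a =
2λ b - a`; and `‖a‖² = ‖v‖²`, `‖b‖ = ‖a‖`, `⟨a, b⟩ = ⟨v, J v⟩ = λ`.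
-/

open Matrix

theorem star_mulVec_dotProduct_mulVec {R m d o : Type*} [NonUnitalSemiring R] [StarRing R]
    [Fintype m] [Fintype d] [Fintype o] (A : Matrix m d R) (B : Matrix m o R) (x : d → R)
    (y : o → R) : star (A *ᵥ x) ⬝ᵥ B *ᵥ y = star x ⬝ᵥ (Aᴴ * B) *ᵥ y := by
  rw [star_mulVec, ← dotProduct_mulVec, mulVec_mulVec]

section RCLike

variable {𝕜 m d : Type*} [RCLike 𝕜] [Fintype m] [Fintype d]

theorem ofReal_sum_norm_sq (x : m → 𝕜) : ((∑ k, ‖x k‖ ^ 2 : ℝ) : 𝕜) = star x ⬝ᵥ x := by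
  simp [dotProduct, RCLike.conj_mul]

theorem sum_norm_sq_mulVec [DecidableEq d] {A : Matrix m d 𝕜} (hA : Aᴴ * A = 1) (x : d → 𝕜) :
    ∑ k, ‖(A *ᵥ x) k‖ ^ 2 = ∑ j, ‖x j‖ ^ 2 := by
  apply RCLike.ofReal_injective (K := 𝕜)
  rw [ofReal_sum_norm_sq, ofReal_sum_norm_sq, star_mulVec_dotProduct_mulVec, hA, one_mulVec]

end RCLike

theorem mulVec_mem_span_pair {R m : Type*} [CommRing R] [Fintype m] {M : Matrix m m R}
    {a b : m → R} {c : R} (ha : M *ᵥ a = b) (hb : M *ᵥ b = c • b - a) :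
    ∀ x ∈ Submodule.span R {a, b}, M *ᵥ x ∈ Submodule.span R {a, b} := by
  have ha_mem : a ∈ Submodule.span R {a, b} := Submodule.subset_span (by simp)
  have hb_mem : b ∈ Submodule.span R {a, b} := Submodule.subset_span (by simp)
  have : Submodule.span R {a, b} ≤ (Submodule.span R {a, b}).comap M.mulVecLin := by
    refine Submodule.span_le.mpr (Set.insert_subset_iff.mpr ⟨?_, Set.singleton_subset_iff.mpr ?_⟩)
    · change M *ᵥ a ∈ Submodule.span R {a, b}
      rwa [ha]
    · change M *ᵥ b ∈ Submodule.span R {a, b}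
      rw [hb]
      exact Submodule.sub_mem _ (Submodule.smul_mem _ c hb_mem) ha_mem
  exact fun x hx => this hx

section Reflection

variable {R m d : Type*} [CommRing R] [StarRing R] [Fintype m] [Fintype d] [DecidableEq m]
  {L : Matrix m d R}

theorem reflection_mulVec (x : m → R) : (2 • (L * Lᴴ) - 1) *ᵥ x = 2 • L *ᵥ Lᴴ *ᵥ x - x := by
  rw [sub_mulVec, one_mulVec, smul_mulVec, mulVec_mulVec]

theorem reflection_mulVec_lift [DecidableEq d] (hL : Lᴴ * L = 1) (w : d → R) :
    (2 • (L * Lᴴ) - 1) *ᵥ L *ᵥ w = L *ᵥ w := by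
  rw [reflection_mulVec, mulVec_mulVec (M := Lᴴ) (N := L), hL, one_mulVec, two_smul,
    add_sub_cancel_right]

theorem reflection_mulVec_shift_lift {S : Matrix m m R} {w : d → R} {μ : R}
    (hw : (Lᴴ * S * L) *ᵥ w = μ • w) :
    (2 • (L * Lᴴ) - 1) *ᵥ S *ᵥ L *ᵥ w = (2 * μ) • L *ᵥ w - S *ᵥ L *ᵥ w := by
  rw [reflection_mulVec, mulVec_mulVec (M := S) (N := L), mulVec_mulVec (M := Lᴴ),
    ← Matrix.mul_assoc, hw, mulVec_smul, mul_smul, two_smul, two_smul]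

end Reflection

/-- `site n k = j` when `k` indexes `|j,L⟩` or `|j,R⟩`. -/
def site (n : ℕ) (k : Fin (2 * n + 2)) : Fin (n + 2) := ⟨(k.1 + 1) / 2, by omega⟩

theorem site_eq_iff {n : ℕ} {k : Fin (2 * n + 2)} {j : Fin (n + 2)} :
    site n k = j ↔ k.1 + 1 = 2 * j.1 ∨ k.1 = 2 * j.1 := by
  simp only [site, Fin.ext_iff]; omega

theorem sum_ite_site_eq {M : Type*} [AddCommMonoid M] {n : ℕ} (f : Fin (2 * n + 2) → M)
    (j : Fin (n + 2)) :
    ∑ k, (if site n k = j then f k else 0) =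
      (if h : 0 < j.1 then f ⟨2 * j.1 - 1, by omega⟩ else 0) +
        if h : j.1 ≤ n then f ⟨2 * j.1, by omega⟩ else 0 := by
  obtain ⟨j, hj⟩ := j
  simp only [site_eq_iff]
  rcases Nat.eq_zero_or_pos j with rfl | hj0
  · rw [Fintype.sum_eq_single ⟨0, by omega⟩
      fun k hk => if_neg (by simp only [ne_eq, Fin.ext_iff] at hk; omega)]
    simp
  rcases (show j ≤ n ∨ j = n + 1 by omega) with hjn | rfl
  · rw [Fintype.sum_eq_add ⟨2 * j - 1, by omega⟩ ⟨2 * j, by omega⟩ (by simp [Fin.ext_iff]; omega)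
      fun k hk => if_neg (by simp only [ne_eq, Fin.ext_iff] at hk; omega)]
    simp (disch := omega) only [dif_pos, if_pos, or_true, if_true]
  · rw [Fintype.sum_eq_single ⟨2 * n + 1, by omega⟩
      fun k hk => if_neg (by simp only [ne_eq, Fin.ext_iff] at hk; omega)]
    simp (disch := omega) only [dif_pos, if_pos, dif_neg, add_zero]
    congr 2

noncomputable def liftCoeff (p q : ℝ) (n : ℕ) (k : Fin (2 * n + 2)) : ℝ :=
  if k.1 = 0 ∨ k.1 = 2 * n + 1 then 1 else if k.1 % 2 = 1 then √q else √p

noncomputable def liftMatrix (p q : ℝ) (n : ℕ) : Matrix (Fin (2 * n + 2)) (Fin (n + 2)) ℂ :=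
  of fun k j => if site n k = j then (liftCoeff p q n k : ℂ) else 0

theorem liftVec_apply (p q : ℝ) (n : ℕ) (v : Fin (n + 2) → ℝ) (k : Fin (2 * n + 2)) :
    liftVec p q n v k = liftCoeff p q n k * v (site n k) := by
  obtain ⟨k, hk⟩ := k
  simp only [liftVec, liftCoeff, site]
  split_ifs <;> (try omega) <;> push_cast <;> simp only [one_mul] <;>
    congr <;> simp only [Fin.ext_iff, Fin.val_zero, Fin.val_last] <;> omega

theorem liftMatrix_mulVec (p q : ℝ) (n : ℕ) (v : Fin (n + 2) → ℝ) :
    liftMatrix p q n *ᵥ (fun j => (v j : ℂ)) = liftVec p q n v := by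
  ext k
  simp [mulVec, dotProduct, liftMatrix, liftVec_apply]

theorem conjTranspose_liftMatrix_apply (p q : ℝ) (n : ℕ) (j : Fin (n + 2)) (k : Fin (2 * n + 2)) :
    (liftMatrix p q n)ᴴ j k = liftMatrix p q n k j := by
  rw [conjTranspose_apply, liftMatrix, of_apply]
  split_ifs <;> simp

theorem conjTranspose_liftMatrix_mul_self {p q : ℝ} (hp : 0 ≤ p) (hq : 0 ≤ q) (hpq : p + q = 1)
    (n : ℕ) : (liftMatrix p q n)ᴴ * liftMatrix p q n = 1 := by
  ext i j
  simp_rw [mul_apply, conjTranspose_liftMatrix_apply, liftMatrix, of_apply, ite_mul, zero_mul,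
    mul_ite, mul_zero]
  rw [sum_ite_site_eq, one_apply]
  obtain ⟨i, hi⟩ := i
  obtain ⟨j, hj⟩ := j
  simp only [site, liftCoeff, Fin.ext_iff]
  split_ifs <;> first | omega | simp | norm_cast
  rw [Real.mul_self_sqrt hq, Real.mul_self_sqrt hp, add_comm, hpq]

theorem liftMatrix_mul_conjTranspose_apply (p q : ℝ) (n : ℕ) (k l : Fin (2 * n + 2)) :
    (liftMatrix p q n * (liftMatrix p q n)ᴴ) k l =
      if site n k = site n l then ((liftCoeff p q n k * liftCoeff p q n l : ℝ) : ℂ) else 0 := by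
  simp_rw [mul_apply, conjTranspose_liftMatrix_apply, liftMatrix, of_apply, ite_mul, zero_mul,
    mul_ite, mul_zero]
  simp [eq_comm]

theorem coinEntry_eq {p q : ℝ} (hp : 0 ≤ p) (hq : 0 ≤ q) {n : ℕ} (k l : Fin (2 * n + 2)) :
    coinEntry p q n k l =
      2 * (if site n k = site n l then liftCoeff p q n k * liftCoeff p q n l else 0) -
        if k = l then 1 else 0 := by
  obtain ⟨k, hk⟩ := k
  obtain ⟨l, hl⟩ := l
  simp only [coinEntry, liftCoeff, site, Fin.ext_iff]
  rw [Real.sqrt_mul hp]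
  split_ifs <;> first | omega | ring_nf <;> simp only [Real.sq_sqrt hp, Real.sq_sqrt hq]

theorem coinM_eq_reflection {p q : ℝ} (hp : 0 ≤ p) (hq : 0 ≤ q) (n : ℕ) :
    coinM p q n = 2 • (liftMatrix p q n * (liftMatrix p q n)ᴴ) - 1 := by
  ext k l
  rw [Matrix.sub_apply, Matrix.smul_apply, liftMatrix_mul_conjTranspose_apply, one_apply, coinM,
    coinEntry_eq hp hq]
  push_cast
  split_ifs <;> simp

def partner (n : ℕ) (k : Fin (2 * n + 2)) : Fin (2 * n + 2) :=
  ⟨if k.1 % 2 = 0 then k.1 + 1 else k.1 - 1, by split_ifs <;> omega⟩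

@[simp]
theorem partner_partner (n : ℕ) (k : Fin (2 * n + 2)) : partner n (partner n k) = k := by
  simp only [partner, Fin.ext_iff]
  split_ifs <;> omega

theorem shiftM_apply (n : ℕ) (k l : Fin (2 * n + 2)) :
    shiftM n k l = if partner n k = l then 1 else 0 := by
  simp only [shiftM, partner, Fin.ext_iff]
  split_ifs <;> first | rfl | omega

theorem shiftM_mul_self (n : ℕ) : shiftM n * shiftM n = 1 := by
  ext k l
  simp_rw [mul_apply, shiftM_apply, ite_mul, one_mul, zero_mul, Finset.sum_ite_eq,
    Finset.mem_univ, if_true, partner_partner, one_apply]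

theorem conjTranspose_shiftM (n : ℕ) : (shiftM n)ᴴ = shiftM n := by
  ext k l
  have h : partner n l = k ↔ partner n k = l := by
    constructor <;> rintro rfl <;> exact partner_partner n _
  simp [shiftM_apply, apply_ite, h]

theorem shiftM_mul_liftMatrix_apply (p q : ℝ) (n : ℕ) (k : Fin (2 * n + 2)) (j : Fin (n + 2)) :
    (shiftM n * liftMatrix p q n) k j = liftMatrix p q n (partner n k) j := by
  simp [mul_apply, shiftM_apply]

theorem conjTranspose_liftMatrix_mul_shiftM_mul_liftMatrix {n : ℕ} (hn : 1 ≤ n) {p q : ℝ}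
    (hp : 0 ≤ p) :
    (liftMatrix p q n)ᴴ * shiftM n * liftMatrix p q n = (jacobiM p q n).map (↑) := by
  ext i j
  rw [Matrix.mul_assoc, mul_apply]
  simp_rw [shiftM_mul_liftMatrix_apply, conjTranspose_liftMatrix_apply, liftMatrix, of_apply,
    ite_mul, zero_mul]
  rw [sum_ite_site_eq, map_apply]
  obtain ⟨i, hi⟩ := i
  obtain ⟨j, hj⟩ := j
  simp only [site, partner, liftCoeff, jacobiM, Fin.ext_iff, Real.sqrt_mul hp]
  rcases (show i = 0 ∨ (1 ≤ i ∧ i ≤ n) ∨ i = n + 1 by omega) with rfl | ⟨hi1, hin⟩ | rfl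
  all_goals
    simp (disch := omega) only [if_pos, if_neg, dif_pos, dif_neg, if_true, true_or]
    split_ifs <;> (try simp only [false_or] at *) <;> first | omega | (push_cast; ring)

theorem walkM_on_lifted_eigenvector_general (n : ℕ) (hn : 1 ≤ n)
    (p q : ℝ) (hp0 : 0 < p) (hq0 : 0 < q) (hpq : p + q = 1)
    (lam : ℝ) (v : Fin (n + 2) → ℝ)
    (hv : ∑ j : Fin (n + 2), (v j) ^ 2 = 1)
    (heig : (jacobiM p q n).mulVec v = lam • v) :
    (∑ k : Fin (2 * n + 2), ‖liftVec p q n v k‖ ^ 2 = 1) ∧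
    (∑ k : Fin (2 * n + 2),
        ‖(shiftM n).mulVec (liftVec p q n v) k‖ ^ 2 = 1) ∧
    (walkM p q n).mulVec (liftVec p q n v) = (shiftM n).mulVec (liftVec p q n v) ∧
    (walkM p q n).mulVec ((shiftM n).mulVec (liftVec p q n v)) =
      ((2 * lam : ℝ) : ℂ) • (shiftM n).mulVec (liftVec p q n v) - liftVec p q n v ∧
    (∑ k : Fin (2 * n + 2),
        (starRingEnd ℂ) (liftVec p q n v k) * (shiftM n).mulVec (liftVec p q n v) k =
      ((lam : ℝ) : ℂ)) ∧
    (∀ x ∈ Submodule.span ℂ {liftVec p q n v, (shiftM n).mulVec (liftVec p q n v)},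
      (walkM p q n).mulVec x ∈
        Submodule.span ℂ {liftVec p q n v, (shiftM n).mulVec (liftVec p q n v)}) := by
  set L := liftMatrix p q n
  set S := shiftM n
  set w : Fin (n + 2) → ℂ := fun j => (v j : ℂ)
  have hL : Lᴴ * L = 1 := conjTranspose_liftMatrix_mul_self hp0.le hq0.le hpq n
  have hS : S * S = 1 := shiftM_mul_self n
  have hU : walkM p q n = S * (2 • (L * Lᴴ) - 1) := by rw [walkM, coinM_eq_reflection hp0.le hq0.le]
  have hw : ∑ j, ‖w j‖ ^ 2 = 1 := by simpa [w] using hv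
  have hJw : (Lᴴ * S * L) *ᵥ w = (lam : ℂ) • w := by
    ext j
    rw [conjTranspose_liftMatrix_mul_shiftM_mul_liftMatrix hn hp0.le]
    exact (RingHom.map_mulVec Complex.ofRealHom (jacobiM p q n) v j).symm.trans
      (by simp [heig, w])
  have hUa : walkM p q n *ᵥ L *ᵥ w = S *ᵥ L *ᵥ w := by
    rw [hU, ← mulVec_mulVec, reflection_mulVec_lift hL]
  have hUb : walkM p q n *ᵥ S *ᵥ L *ᵥ w = (2 * (lam : ℂ)) • S *ᵥ L *ᵥ w - L *ᵥ w := by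
    rw [hU, ← mulVec_mulVec, reflection_mulVec_shift_lift hJw, mulVec_sub, mulVec_smul,
      mulVec_mulVec (M := S) (N := S), hS, one_mulVec]
  have hnorm : ∑ k, ‖(L *ᵥ w) k‖ ^ 2 = 1 := (sum_norm_sq_mulVec hL w).trans hw
  rw [← liftMatrix_mulVec]
  refine ⟨hnorm, ?_, hUa, by rw [hUb]; push_cast; rfl, ?_, mulVec_mem_span_pair hUa hUb⟩
  · rw [sum_norm_sq_mulVec (by rw [conjTranspose_shiftM, hS]), hnorm]
  · change star (L *ᵥ w) ⬝ᵥ S *ᵥ L *ᵥ w = lam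
    rw [mulVec_mulVec, star_mulVec_dotProduct_mulVec, ← Matrix.mul_assoc, hJw, dotProduct_smul,
      ← ofReal_sum_norm_sq, hw]
    simp

/-- **Lemma.** Let `v` be a unit eigenvector of `J` with eigenvalue `λ`, and set
`a = v(0)|0,R⟩ + ∑_{j=1}^n v(j)(√q|j,L⟩ + √p|j,R⟩) + v(n+1)|n+1,L⟩` and `b = S a`.
Then `‖a‖ = ‖b‖ = 1`, `U a = b`, `U b = 2λb - a`, and `⟨a,b⟩ = λ`; in particular `U`
preserves the span of `{a, b}`. -/
theorem walkM_on_lifted_eigenvector (n : ℕ) (hn : 1 ≤ n)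
    (p q : ℝ) (hp0 : 0 < p) (hp1 : p < 1) (hq0 : 0 < q) (hq1 : q < 1) (hpq : p + q = 1)
    (lam : ℝ) (v : Fin (n + 2) → ℝ)
    (hv : ∑ j : Fin (n + 2), (v j) ^ 2 = 1)
    (heig : (jacobiM p q n).mulVec v = lam • v) :
    (∑ k : Fin (2 * n + 2), ‖liftVec p q n v k‖ ^ 2 = 1) ∧
    (∑ k : Fin (2 * n + 2),
        ‖(shiftM n).mulVec (liftVec p q n v) k‖ ^ 2 = 1) ∧
    (walkM p q n).mulVec (liftVec p q n v) = (shiftM n).mulVec (liftVec p q n v) ∧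
    (walkM p q n).mulVec ((shiftM n).mulVec (liftVec p q n v)) =
      ((2 * lam : ℝ) : ℂ) • (shiftM n).mulVec (liftVec p q n v) - liftVec p q n v ∧
    (∑ k : Fin (2 * n + 2),
        (starRingEnd ℂ) (liftVec p q n v k) * (shiftM n).mulVec (liftVec p q n v) k =
      ((lam : ℝ) : ℂ)) ∧
    (∀ x ∈ Submodule.span ℂ {liftVec p q n v, (shiftM n).mulVec (liftVec p q n v)},
      (walkM p q n).mulVec x ∈
        Submodule.span ℂ {liftVec p q n v, (shiftM n).mulVec (liftVec p q n v)}) :=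
  walkM_on_lifted_eigenvector_general n hn p q hp0 hq0 hpq lam v hv heig
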